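/- Let n ≥ 3, p ≥ 3, t ∈ (0,1), m > 0, and let Σ be a finite measure space with nonnegative measurable functions f (with f, f^p integrable, not a.e. zero) and h, satisfying: (a) ∫_Σ f dσ = m(n-2)|S^{n-1}|; (b) m^p(n-2)^p|S^{n-1}| ≤ (2m/(1-t²))^{(p-1)(n-1)/(n-2)} ∫_Σ f^p dσ; and (c) (t/(1-t²))·(2/(n-2)) ∫_Σ f^p dσ ≤ (1/(n-1)) ∫_Σ f^{p-1} h dσ. Then the two mass bounds hold: ((1-t²)/2)·K·(|Σ|/|S^{n-1}|)^{(n-2)/(n-1)} ≤ m ≤ ((1-t²)/(2t))·||h/(n-1)||_{L^p_0(Σ)}·(|Σ|/|S^{n-1}|), where K = ( ||f||_{L^1_0(Σ)}/||f||_{L^p_0(Σ)} )^{p(n-2)/((p-1)(n-1))} and ||·||_{L^r_0} denotes the measure-normalized L^r norm. -/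

import Mathlib

open MeasureTheory

/-- The measure-normalized `L^r` norm `||f||_{L^r_0} = ((1/σ(X)) ∫ f^r dσ)^{1/r}`. -/
noncomputable def normLp0 {X : Type*} [MeasurableSpace X] (σ : Measure X)
    (f : X → ℝ) (r : ℝ) : ℝ :=
  ((σ Set.univ).toReal⁻¹ * ∫ x, f x ^ r ∂σ) ^ (1 / r)

/-! The lower bound follows from (a) and (b) alone by rearranging exponents. For the upper bound,
Hölder's inequality turns (c) into `‖f‖_{L^p_0} ≤ ((1-t²)(n-2)/(2t)) ‖h/(n-1)‖_{L^p_0}`, while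
Jensen's inequality `‖f‖_{L^1_0} ≤ ‖f‖_{L^p_0}` bounds `m` through (a). -/

theorem Real.rpow_div_mul_rpow_div_le {x y a b α R : ℝ} (hx : 0 ≤ x) (hy : 0 ≤ y) (hα : 0 < α)
    (hR : 0 ≤ R) (h : x ^ a * y ^ b ≤ R ^ α) : x ^ (a / α) * y ^ (b / α) ≤ R :=
  calc x ^ (a / α) * y ^ (b / α) = (x ^ a * y ^ b) ^ α⁻¹ := by
        rw [Real.mul_rpow (by positivity) (by positivity), ← Real.rpow_mul hx,
          ← Real.rpow_mul hy, div_eq_mul_inv, div_eq_mul_inv]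
    _ ≤ (R ^ α) ^ α⁻¹ := by gcongr
    _ = R := Real.rpow_rpow_inv hR hα.ne'

namespace MeasureTheory

variable {X : Type*} [MeasurableSpace X] {σ : Measure X} {f g : X → ℝ} {p : ℝ}

theorem Integrable.memLp_of_rpow (hp : 0 < p) (hf0 : ∀ x, 0 ≤ f x)
    (hfp : Integrable (fun x => f x ^ p) σ) : MemLp f (ENNReal.ofReal p) σ := by
  have hq0 : ENNReal.ofReal p ≠ 0 := by simpa using hp
  have hmeas : AEStronglyMeasurable f σ := by
    have hroot : (fun x => (f x ^ p) ^ (1 / p)) = f := by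
      ext x
      rw [← Real.rpow_mul (hf0 x), mul_one_div_cancel hp.ne', Real.rpow_one]
    exact hroot ▸ (hfp.1.aemeasurable.pow_const (1 / p)).aestronglyMeasurable
  refine (memLp_norm_rpow_iff hmeas hq0 ENNReal.ofReal_ne_top).mp ?_
  rw [ENNReal.div_self hq0 ENNReal.ofReal_ne_top, memLp_one_iff_integrable]
  convert hfp using 2 with x
  rw [ENNReal.toReal_ofReal hp.le, Real.norm_of_nonneg (hf0 x)]

theorem integral_rpow_sub_one_mul_le (hp : 1 < p) (hf0 : ∀ x, 0 ≤ f x) (hg0 : ∀ x, 0 ≤ g x)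
    (hfp : Integrable (fun x => f x ^ p) σ) (hgp : Integrable (fun x => g x ^ p) σ) :
    ∫ x, f x ^ (p - 1) * g x ∂σ ≤
      (∫ x, f x ^ p ∂σ) ^ ((p - 1) / p) * (∫ x, g x ^ p ∂σ) ^ (1 / p) := by
  have hp0 : 0 < p := by linarith
  have hpq : (p / (p - 1)).HolderConjugate p := (Real.HolderConjugate.conjExponent hp).symm
  have hpow : ∀ x, (f x ^ (p - 1)) ^ (p / (p - 1)) = f x ^ p := fun x => by
    rw [← Real.rpow_mul (hf0 x), mul_div_cancel₀ _ (by linarith : p - 1 ≠ 0)]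
  have hfq : MemLp (fun x => f x ^ (p - 1)) (ENNReal.ofReal (p / (p - 1))) σ :=
    Integrable.memLp_of_rpow hpq.pos (fun x => Real.rpow_nonneg (hf0 x) _)
      (by simpa only [hpow] using hfp)
  have H := integral_mul_le_Lp_mul_Lq_of_nonneg hpq
    (ae_of_all _ fun x => Real.rpow_nonneg (hf0 x) _) (ae_of_all _ hg0) hfq
    (Integrable.memLp_of_rpow hp0 hg0 hgp)
  simpa only [hpow, one_div_div] using H

theorem normLp0_nonneg (hf0 : ∀ x, 0 ≤ f x) (r : ℝ) : 0 ≤ normLp0 σ f r :=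
  Real.rpow_nonneg (mul_nonneg (by positivity)
    (integral_nonneg fun x => Real.rpow_nonneg (hf0 x) r)) _

theorem normLp0_one (f : X → ℝ) : normLp0 σ f 1 = (σ Set.univ).toReal⁻¹ * ∫ x, f x ∂σ := by
  simp [normLp0]

theorem normLp0_eq_mul_rpow (hf0 : ∀ x, 0 ≤ f x) (r : ℝ) :
    normLp0 σ f r = ((σ Set.univ).toReal⁻¹) ^ (1 / r) * (∫ x, f x ^ r ∂σ) ^ (1 / r) :=
  Real.mul_rpow (by positivity) (integral_nonneg fun x => Real.rpow_nonneg (hf0 x) r)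

theorem toReal_measure_univ_pos_of_integral_pos [IsFiniteMeasure σ] (h : 0 < ∫ x, f x ∂σ) :
    0 < (σ Set.univ).toReal := by
  refine ENNReal.toReal_pos (fun h0 => ?_) (measure_ne_top σ _)
  rw [Measure.measure_univ_eq_zero.mp h0, integral_zero_measure] at h
  exact h.false

theorem normLp0_one_le_normLp0 [IsFiniteMeasure σ] (hp : 1 < p) (hf0 : ∀ x, 0 ≤ f x)
    (hfp : Integrable (fun x => f x ^ p) σ) : normLp0 σ f 1 ≤ normLp0 σ f p := by
  have hp0 : 0 < p := by linarith
  rcases (ENNReal.toReal_nonneg : 0 ≤ (σ Set.univ).toReal).eq_or_lt with hV | hV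
  · rw [normLp0_one, ← hV, inv_zero, zero_mul]
    exact normLp0_nonneg hf0 p
  have H := integral_mul_le_Lp_mul_Lq_of_nonneg (Real.HolderConjugate.conjExponent hp)
    (ae_of_all _ hf0) (ae_of_all _ fun _ => zero_le_one) (Integrable.memLp_of_rpow hp0 hf0 hfp)
    (memLp_const (1 : ℝ))
  simp only [mul_one, Real.one_rpow, integral_const, smul_eq_mul, Real.conjExponent,
    one_div_div, measureReal_def, sub_div, div_self hp0.ne', Real.rpow_sub hV, Real.rpow_one] at H
  calc normLp0 σ f 1 = (σ Set.univ).toReal⁻¹ * ∫ x, f x ∂σ := normLp0_one f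
    _ ≤ (σ Set.univ).toReal⁻¹ * ((∫ x, f x ^ p ∂σ) ^ (1 / p) *
          ((σ Set.univ).toReal / (σ Set.univ).toReal ^ (1 / p))) := by gcongr
    _ = normLp0 σ f p := by
        rw [normLp0_eq_mul_rpow hf0, Real.inv_rpow hV.le]
        field_simp

theorem mul_normLp0_le_of_mul_integral_le (hp : 1 < p) (hf0 : ∀ x, 0 ≤ f x)
    (hg0 : ∀ x, 0 ≤ g x) (hfp : Integrable (fun x => f x ^ p) σ)
    (hgp : Integrable (fun x => g x ^ p) σ) {c : ℝ}
    (h : c * ∫ x, f x ^ p ∂σ ≤ ∫ x, f x ^ (p - 1) * g x ∂σ) :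
    c * normLp0 σ f p ≤ normLp0 σ g p := by
  set B := ∫ x, f x ^ p ∂σ
  have hp0 : 0 < p := by linarith
  have hB : 0 ≤ B := integral_nonneg fun x => Real.rpow_nonneg (hf0 x) p
  have hroot : c * B ^ (1 / p) ≤ (∫ x, g x ^ p ∂σ) ^ (1 / p) := by
    rcases hB.eq_or_lt with hB0 | hBpos
    · rw [← hB0, Real.zero_rpow (by positivity), mul_zero]
      exact Real.rpow_nonneg (integral_nonneg fun x => Real.rpow_nonneg (hg0 x) p) _
    have hsplit : B ^ ((p - 1) / p) * B ^ (1 / p) = B := by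
      rw [← Real.rpow_add hBpos, ← add_div, sub_add_cancel, div_self hp0.ne', Real.rpow_one]
    refine le_of_mul_le_mul_left ?_ (Real.rpow_pos_of_pos hBpos ((p - 1) / p))
    calc B ^ ((p - 1) / p) * (c * B ^ (1 / p)) = c * (B ^ ((p - 1) / p) * B ^ (1 / p)) := by ring
      _ = c * B := by rw [hsplit]
      _ ≤ _ := h.trans (integral_rpow_sub_one_mul_le hp hf0 hg0 hfp hgp)
  rw [normLp0_eq_mul_rpow hf0, normLp0_eq_mul_rpow hg0, mul_left_comm]
  gcongr

/-- The ratio `‖f‖_{L^1_0} / ‖f‖_{L^p_0}` is invariant under scaling `σ`. -/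
theorem normLp0_one_div_normLp0_rpow_mul (hV : 0 < (σ Set.univ).toReal) (hp : p ≠ 0)
    (hf0 : ∀ x, 0 ≤ f x) :
    (normLp0 σ f 1 / normLp0 σ f p) ^ p * (σ Set.univ).toReal ^ (p - 1) =
      (∫ x, f x ∂σ) ^ p / ∫ x, f x ^ p ∂σ := by
  have hA : 0 ≤ ∫ x, f x ∂σ := integral_nonneg hf0
  have hB : 0 ≤ ∫ x, f x ^ p ∂σ := integral_nonneg fun x => Real.rpow_nonneg (hf0 x) p
  rw [normLp0_one, normLp0, Real.div_rpow (by positivity) (by positivity),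
    ← Real.rpow_mul (by positivity), one_div_mul_cancel hp, Real.rpow_one,
    Real.mul_rpow (by positivity) hA, Real.inv_rpow hV.le, Real.rpow_sub_one hV.ne']
  have : (σ Set.univ).toReal ^ p ≠ 0 := (Real.rpow_pos_of_pos hV p).ne'
  field_simp

end MeasureTheory

section MassBounds

variable {X : Type*} [MeasurableSpace X] {σ : Measure X} [IsFiniteMeasure σ] {f h : X → ℝ}
  {n p t m Sn : ℝ}

theorem mass_lower_bound (hn : 2 < n) (hp : 1 < p) (ht : t ^ 2 < 1) (hm : 0 < m)
    (hSn : 0 < Sn) (hf0 : ∀ x, 0 ≤ f x) (ha : ∫ x, f x ∂σ = m * (n - 2) * Sn)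
    (hb : m ^ p * (n - 2) ^ p * Sn ≤
      (2 * m / (1 - t ^ 2)) ^ ((p - 1) * (n - 1) / (n - 2)) * ∫ x, f x ^ p ∂σ) :
    ((1 - t ^ 2) / 2) * (normLp0 σ f 1 / normLp0 σ f p) ^ (p * (n - 2) / ((p - 1) * (n - 1))) *
      ((σ Set.univ).toReal / Sn) ^ ((n - 2) / (n - 1)) ≤ m := by
  set R := 2 * m / (1 - t ^ 2)
  set α := (p - 1) * (n - 1) / (n - 2)
  set A := ∫ x, f x ∂σ
  set B := ∫ x, f x ^ p ∂σ
  set V := (σ Set.univ).toReal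
  have ht' : 0 < 1 - t ^ 2 := by linarith
  have hR : 0 < R := by positivity
  have hα : 0 < α := div_pos (mul_pos (by linarith) (by linarith)) (by linarith)
  have hA : 0 < A := by rw [ha]; exact mul_pos (mul_pos hm (by linarith)) hSn
  have hV : 0 < V := toReal_measure_univ_pos_of_integral_pos hA
  have hB : 0 ≤ B := integral_nonneg fun x => Real.rpow_nonneg (hf0 x) p
  have hAp : A ^ p = Sn ^ (p - 1) * (m ^ p * (n - 2) ^ p * Sn) := by
    rw [ha, Real.mul_rpow (by positivity) hSn.le, Real.mul_rpow hm.le (by linarith),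
      Real.rpow_sub_one hSn.ne']
    field_simp
  have key : (normLp0 σ f 1 / normLp0 σ f p) ^ p * (V / Sn) ^ (p - 1) ≤ R ^ α := by
    rw [Real.div_rpow hV.le hSn.le, ← mul_div_assoc,
      normLp0_one_div_normLp0_rpow_mul hV (by linarith) hf0, div_div]
    refine div_le_of_le_mul₀ (by positivity) (by positivity) ?_
    calc A ^ p = Sn ^ (p - 1) * (m ^ p * (n - 2) ^ p * Sn) := hAp
      _ ≤ Sn ^ (p - 1) * (R ^ α * B) := by gcongr
      _ = R ^ α * (B * Sn ^ (p - 1)) := by ring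
  have hroot := Real.rpow_div_mul_rpow_div_le
    (div_nonneg (normLp0_nonneg hf0 1) (normLp0_nonneg hf0 p)) (by positivity) hα hR.le key
  have hp1 : p - 1 ≠ 0 := (sub_pos.mpr hp).ne'
  have hexp₁ : p * (n - 2) / ((p - 1) * (n - 1)) = p / α := by
    simp only [α]; field_simp
  have hexp₂ : (n - 2) / (n - 1) = (p - 1) / α := by
    simp only [α]; field_simp
  rw [hexp₁, hexp₂, mul_assoc]
  calc (1 - t ^ 2) / 2 * ((normLp0 σ f 1 / normLp0 σ f p) ^ (p / α) * (V / Sn) ^ ((p - 1) / α))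
      ≤ (1 - t ^ 2) / 2 * R := by gcongr
    _ = m := by simp only [R]; field_simp

theorem mass_upper_bound (hn : 2 < n) (hp : 1 < p) (ht : t ∈ Set.Ioo (0 : ℝ) 1) (hm : 0 < m)
    (hSn : 0 < Sn) (hf0 : ∀ x, 0 ≤ f x) (hh0 : ∀ x, 0 ≤ h x)
    (hfp : Integrable (fun x => f x ^ p) σ) (hhp : Integrable (fun x => h x ^ p) σ)
    (ha : ∫ x, f x ∂σ = m * (n - 2) * Sn)
    (hc : (t / (1 - t ^ 2)) * (2 / (n - 2)) * ∫ x, f x ^ p ∂σ ≤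
      (1 / (n - 1)) * ∫ x, f x ^ (p - 1) * h x ∂σ) :
    m ≤ ((1 - t ^ 2) / (2 * t)) * normLp0 σ (fun x => h x / (n - 1)) p *
      ((σ Set.univ).toReal / Sn) := by
  obtain ⟨ht0, ht1⟩ := ht
  set c := (t / (1 - t ^ 2)) * (2 / (n - 2))
  set V := (σ Set.univ).toReal
  have ht' : 0 < 1 - t ^ 2 := by nlinarith
  have hn1 : 0 < n - 1 := by linarith
  have hn2 : n - 2 ≠ 0 := (sub_pos.mpr hn).ne'
  have hA : 0 < ∫ x, f x ∂σ := by rw [ha]; exact mul_pos (mul_pos hm (by linarith)) hSn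
  have hV : 0 < V := toReal_measure_univ_pos_of_integral_pos hA
  have hg0 : ∀ x, 0 ≤ h x / (n - 1) := fun x => div_nonneg (hh0 x) hn1.le
  have hgp : Integrable (fun x => (h x / (n - 1)) ^ p) σ := by
    simp_rw [Real.div_rpow (hh0 _) hn1.le]
    exact hhp.div_const _
  have hc' : c * ∫ x, f x ^ p ∂σ ≤ ∫ x, f x ^ (p - 1) * (h x / (n - 1)) ∂σ := by
    simp_rw [mul_div_assoc', integral_div]
    simpa [div_eq_inv_mul] using hc
  have hholder := mul_normLp0_le_of_mul_integral_le hp hf0 hg0 hfp hgp hc'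
  have hjensen : m * (n - 2) * Sn / V ≤ normLp0 σ f p := by
    rw [← ha, div_eq_inv_mul, ← normLp0_one]
    exact normLp0_one_le_normLp0 hp hf0 hfp
  calc m = (1 - t ^ 2) / (2 * t) * (c * (m * (n - 2) * Sn / V)) * (V / Sn) := by
        simp only [c]; field_simp
    _ ≤ (1 - t ^ 2) / (2 * t) * (c * normLp0 σ f p) * (V / Sn) := by gcongr
    _ ≤ _ := by gcongr

end MassBounds

theorem stmt_18_general {X : Type*} [MeasurableSpace X] (σ : Measure X) [IsFiniteMeasure σ]
    (n : ℕ) (hn : 3 ≤ n) (p t m Sn : ℝ) (hp : 3 ≤ p)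
    (ht : t ∈ Set.Ioo (0 : ℝ) 1) (hm : 0 < m) (hSn : 0 < Sn)
    (f h : X → ℝ) (hf0 : ∀ x, 0 ≤ f x) (hh0 : ∀ x, 0 ≤ h x)
    (hfp : Integrable (fun x => f x ^ p) σ)
    (hhp : Integrable (fun x => h x ^ p) σ)
    (ha : ∫ x, f x ∂σ = m * ((n : ℝ) - 2) * Sn)
    (hb : m ^ p * ((n : ℝ) - 2) ^ p * Sn ≤
      (2 * m / (1 - t ^ 2)) ^ ((p - 1) * ((n : ℝ) - 1) / ((n : ℝ) - 2)) * ∫ x, f x ^ p ∂σ)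
    (hc : (t / (1 - t ^ 2)) * (2 / ((n : ℝ) - 2)) * ∫ x, f x ^ p ∂σ ≤
      (1 / ((n : ℝ) - 1)) * ∫ x, f x ^ (p - 1) * h x ∂σ) :
    ((1 - t ^ 2) / 2) *
        (normLp0 σ f 1 / normLp0 σ f p) ^ (p * ((n : ℝ) - 2) / ((p - 1) * ((n : ℝ) - 1))) *
        ((σ Set.univ).toReal / Sn) ^ (((n : ℝ) - 2) / ((n : ℝ) - 1)) ≤ m ∧
    m ≤ ((1 - t ^ 2) / (2 * t)) * normLp0 σ (fun x => h x / ((n : ℝ) - 1)) p *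
        ((σ Set.univ).toReal / Sn) := by
  have hn2 : (2 : ℝ) < n := by exact_mod_cast hn
  have hp1 : 1 < p := by linarith
  have ht2 : t ^ 2 < 1 := by nlinarith [ht.1, ht.2]
  exact ⟨mass_lower_bound hn2 hp1 ht2 hm hSn hf0 ha hb,
    mass_upper_bound hn2 hp1 ht hm hSn hf0 hh0 hfp hhp ha hc⟩

/-- Measure-theoretic content of the two-sided mass bound (Theorem 1.5): on a finite measure
space `Σ` with `f = |Du| ≥ 0`, `h = H ≥ 0`, hypotheses (a) `∫f = m(n-2)|S^{n-1}|`,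
(b) `m^p(n-2)^p|S^{n-1}| ≤ (2m/(1-t²))^{(p-1)(n-1)/(n-2)}∫f^p`, and
(c) `(t/(1-t²))(2/(n-2))∫f^p ≤ (1/(n-1))∫f^{p-1}h` imply
`((1-t²)/2)·K·(|Σ|/|S^{n-1}|)^{(n-2)/(n-1)} ≤ m ≤ ((1-t²)/(2t))·||h/(n-1)||_{L^p_0}·|Σ|/|S^{n-1}|`,
with `K = (||f||_{L^1_0}/||f||_{L^p_0})^{p(n-2)/((p-1)(n-1))}`. -/
theorem stmt_18 {X : Type*} [MeasurableSpace X] (σ : Measure X) [IsFiniteMeasure σ]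
    (n : ℕ) (hn : 3 ≤ n) (p t m Sn : ℝ) (hp : 3 ≤ p)
    (ht : t ∈ Set.Ioo (0 : ℝ) 1) (hm : 0 < m) (hSn : 0 < Sn)
    (f h : X → ℝ) (hf0 : ∀ x, 0 ≤ f x) (hh0 : ∀ x, 0 ≤ h x)
    (hfi : Integrable f σ) (hfp : Integrable (fun x => f x ^ p) σ)
    (hhp : Integrable (fun x => h x ^ p) σ)
    (hfh : Integrable (fun x => f x ^ (p - 1) * h x) σ)
    (hfne : ¬ (f =ᵐ[σ] 0))
    (ha : ∫ x, f x ∂σ = m * ((n : ℝ) - 2) * Sn)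
    (hb : m ^ p * ((n : ℝ) - 2) ^ p * Sn ≤
      (2 * m / (1 - t ^ 2)) ^ ((p - 1) * ((n : ℝ) - 1) / ((n : ℝ) - 2)) * ∫ x, f x ^ p ∂σ)
    (hc : (t / (1 - t ^ 2)) * (2 / ((n : ℝ) - 2)) * ∫ x, f x ^ p ∂σ ≤
      (1 / ((n : ℝ) - 1)) * ∫ x, f x ^ (p - 1) * h x ∂σ) :
    ((1 - t ^ 2) / 2) *
        (normLp0 σ f 1 / normLp0 σ f p) ^ (p * ((n : ℝ) - 2) / ((p - 1) * ((n : ℝ) - 1))) *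
        ((σ Set.univ).toReal / Sn) ^ (((n : ℝ) - 2) / ((n : ℝ) - 1)) ≤ m ∧
    m ≤ ((1 - t ^ 2) / (2 * t)) * normLp0 σ (fun x => h x / ((n : ℝ) - 1)) p *
        ((σ Set.univ).toReal / Sn) :=
  stmt_18_general σ n hn p t m Sn hp ht hm hSn f h hf0 hh0 hfp hhp ha hb hc
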